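/- Define c(x) = 2·arsinh(sin(π·x/2)) and, for a positive integer r, C_r = ∑_{j=1}^{r-1} c(j/r) (interpreted as 0 when r = 1). Then for all positive integers r ≤ s, one has r·C_s − s·C_r ≥ 0, i.e., C_s/s ≥ C_r/r. -/

import Mathlib

open Real Finset

/-- `cFun x = 2 · arsinh (sin (π x / 2))`. -/
noncomputable def cFun (x : ℝ) : ℝ := 2 * Real.arsinh (Real.sin (π * x / 2))

/-- `C r = ∑_{j=1}^{r-1} c(j/r)` (interpreted as `0` when `r = 1`). -/
noncomputable def Csum (r : ℕ) : ℝ := ∑ j ∈ Finset.Icc 1 (r - 1), cFun ((j : ℝ) / r)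

/-!
Since `c 0 = 0`, both sides are sums over `i < r s`: `r C_s = ∑ c (⌊i / r⌋ / s)` and
`s C_r = ∑ c (⌊i / s⌋ / r)`. All arguments lie in `[0, 1]`, where `c` is increasing and concave;
the first sequence is monotone and its partial sums dominate those of the second, which after
clearing denominators is `∑_{i<k} (i mod r) ≤ ∑_{i<k} (i mod s)`. The weak-majorization
(Tomić–Weyl) inequality for increasing concave functions, proved by comparing with the tangent
lines at the first sequence and summing by parts, concludes.
-/

theorem sum_mul_nonneg_of_antitoneOn {R : Type*} [CommRing R] [PartialOrder R] [IsOrderedRing R]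
    {d z : ℕ → R} {n : ℕ} (hd : AntitoneOn d (Set.Iio n)) (hd₀ : ∀ i < n, 0 ≤ d i)
    (hz : ∀ k ≤ n, 0 ≤ ∑ i ∈ range k, z i) : 0 ≤ ∑ i ∈ range n, d i * z i := by
  rcases Nat.eq_zero_or_pos n with rfl | hn
  · simp
  have hparts := sum_range_by_parts d z n
  simp only [smul_eq_mul] at hparts
  rw [hparts]
  refine sub_nonneg_of_le <| (sum_nonpos fun i hi => ?_).trans <|
    mul_nonneg (hd₀ _ (by omega)) (hz n le_rfl)
  have hi : i + 1 < n := by rw [mem_range] at hi; omega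
  exact mul_nonpos_of_nonpos_of_nonneg
    (sub_nonpos.2 (hd (show i < n by omega) (show i + 1 < n from hi) (by omega))) (hz _ hi.le)

namespace ConcaveOn

variable {I : Set ℝ} {f : ℝ → ℝ}

theorem le_add_deriv_mul_sub (hf : ConcaveOn ℝ I f) {x y : ℝ} (hx : x ∈ I) (hy : y ∈ I)
    (hfx : DifferentiableAt ℝ f x) : f y ≤ f x + deriv f x * (y - x) := by
  rcases lt_trichotomy x y with hxy | rfl | hxy
  · have := hf.slope_le_deriv hx hy hxy hfx
    rw [slope_def_field, div_le_iff₀ (sub_pos.2 hxy)] at this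
    linarith
  · simp
  · have := hf.deriv_le_slope hy hx hxy hfx
    rw [slope_def_field, le_div_iff₀ (sub_pos.2 hxy)] at this
    linarith

theorem sum_le_sum_of_sum_range_le (hf : ConcaveOn ℝ I f)
    (hfd : ∀ x ∈ I, DifferentiableAt ℝ f x) (hf' : ∀ x ∈ I, 0 ≤ deriv f x)
    {a b : ℕ → ℝ} {n : ℕ} (ha : MonotoneOn a (Set.Iio n)) (haI : ∀ i < n, a i ∈ I)
    (hbI : ∀ i < n, b i ∈ I) (hab : ∀ k ≤ n, ∑ i ∈ range k, b i ≤ ∑ i ∈ range k, a i) :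
    ∑ i ∈ range n, f (b i) ≤ ∑ i ∈ range n, f (a i) := by
  have hd : AntitoneOn (fun i => deriv f (a i)) (Set.Iio n) := fun i hi j hj hij =>
    hf.antitoneOn_deriv hfd (haI i hi) (haI j hj) (ha hi hj hij)
  have hsum : 0 ≤ ∑ i ∈ range n, deriv f (a i) * (a i - b i) :=
    sum_mul_nonneg_of_antitoneOn hd (fun i hi => hf' _ (haI i hi))
      fun k hk => by simpa [sum_sub_distrib] using hab k hk
  calc ∑ i ∈ range n, f (b i)
      ≤ ∑ i ∈ range n, (f (a i) + deriv f (a i) * (b i - a i)) :=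
        sum_le_sum fun i hi => by
          rw [mem_range] at hi
          exact hf.le_add_deriv_mul_sub (haI i hi) (hbI i hi) (hfd _ (haI i hi))
    _ = ∑ i ∈ range n, f (a i) - ∑ i ∈ range n, deriv f (a i) * (a i - b i) := by
        rw [← sum_sub_distrib]; congr 1 with i; ring
    _ ≤ ∑ i ∈ range n, f (a i) := sub_le_self _ hsum

end ConcaveOn

theorem sum_range_add_mod_self (m x : ℕ) :
    ∑ i ∈ range (m + x), i % m = ∑ i ∈ range m, i + ∑ i ∈ range x, i % m := by
  rw [sum_range_add]
  congr 1
  · exact sum_congr rfl fun i hi => Nat.mod_eq_of_lt (mem_range.1 hi)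
  · simp only [Nat.add_mod_left]

theorem sum_range_add_mul_mod (m x q : ℕ) :
    ∑ i ∈ range (q * m + x), i % m = q * ∑ i ∈ range m, i + ∑ i ∈ range x, i % m := by
  induction q with
  | zero => simp
  | succ q ih =>
    rw [add_mul, one_mul, add_comm (q * m), add_assoc, sum_range_add_mod_self, ih]
    ring

theorem sum_range_add_mod_le {m : ℕ} (hm : 0 < m) (x c : ℕ) :
    ∑ i ∈ range (x + c), i % m ≤ ∑ i ∈ range x, i % m + c * m := by
  rw [sum_range_add]
  gcongr
  simpa using sum_le_card_nsmul (range c) _ m fun i _ => (Nat.mod_lt _ hm).le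

theorem sum_range_mod_le_sum_range_mod {r s : ℕ} (hr : 0 < r) (hrs : r ≤ s) (k : ℕ) :
    ∑ i ∈ range k, i % r ≤ ∑ i ∈ range k, i % s := by
  obtain ⟨c, rfl⟩ := Nat.exists_eq_add_of_le hrs
  set M := k / (r + c)
  set u := k % (r + c)
  have hk : k = M * (r + c) + u := (Nat.div_add_mod' k _).symm
  have hu : u < r + c := Nat.mod_lt _ (by omega)
  -- A full period mod `r + c` outweighs a period mod `r` plus `c` further residues mod `r`.
  have hgauss : c * r + ∑ i ∈ range r, i ≤ ∑ i ∈ range (r + c), i := by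
    rw [sum_range_add, add_comm]
    gcongr
    simpa using card_nsmul_le_sum (range c) (fun i => r + i) r fun i _ => Nat.le_add_right r i
  have hsmall : ∑ i ∈ range u, i % r ≤ ∑ i ∈ range u, i % (r + c) :=
    sum_le_sum fun i hi =>
      (Nat.mod_le i r).trans_eq (Nat.mod_eq_of_lt ((mem_range.1 hi).trans hu)).symm
  calc ∑ i ∈ range k, i % r
      = M * ∑ i ∈ range r, i + ∑ i ∈ range (u + M * c), i % r := by
        rw [← sum_range_add_mul_mod]; congr 2; rw [hk]; ring
    _ ≤ M * ∑ i ∈ range r, i + (∑ i ∈ range u, i % r + M * c * r) := by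
        gcongr; exact sum_range_add_mod_le hr _ _
    _ ≤ M * ∑ i ∈ range (r + c), i + ∑ i ∈ range u, i % (r + c) := by
        nlinarith [Nat.mul_le_mul_left M hgauss]
    _ = ∑ i ∈ range k, i % (r + c) := by rw [← sum_range_add_mul_mod, ← hk]

theorem sum_range_mul_div_le {r s : ℕ} (hr : 0 < r) (hrs : r ≤ s) (k : ℕ) :
    ∑ i ∈ range k, s * (i / s) ≤ ∑ i ∈ range k, r * (i / r) := by
  have hdecomp (m : ℕ) :
      ∑ i ∈ range k, m * (i / m) + ∑ i ∈ range k, i % m = ∑ i ∈ range k, i := by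
    rw [← sum_add_distrib]; exact sum_congr rfl fun i _ => Nat.div_add_mod i m
  have := sum_range_mod_le_sum_range_mod hr hrs k
  have := hdecomp r
  have := hdecomp s
  omega

theorem sum_range_mul_comp_div {M : Type*} [AddCommMonoid M] (f : ℕ → M) (m n : ℕ) :
    ∑ i ∈ range (n * m), f (i / m) = m • ∑ j ∈ range n, f j := by
  induction n with
  | zero => simp
  | succ n ih =>
    rw [add_mul, one_mul, sum_range_add, ih, sum_range_succ, smul_add]
    congr 1
    have hblock : ∀ i ∈ range m, f ((n * m + i) / m) = f n := fun i hi => by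
      rw [mem_range] at hi
      rw [add_comm, Nat.add_mul_div_right _ _ (by omega), Nat.div_eq_of_lt hi, zero_add]
    rw [sum_congr rfl hblock, sum_const, card_range]

noncomputable def cFunDeriv (x : ℝ) : ℝ := π * cos (π * x / 2) / √(1 + sin (π * x / 2) ^ 2)

theorem hasDerivAt_cFun (x : ℝ) : HasDerivAt cFun (cFunDeriv x) x := by
  have hangle : HasDerivAt (fun x : ℝ => π * x / 2) (π / 2) x := by
    simpa using ((hasDerivAt_id x).const_mul π).div_const 2
  have hsqrt : √(1 + sin (π * x / 2) ^ 2) ≠ 0 := by positivity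
  refine (((hasDerivAt_arsinh _).comp x ((hasDerivAt_sin _).comp x hangle)).const_mul 2).congr_deriv
    ?_
  rw [cFunDeriv, Function.comp_apply]
  field_simp

theorem deriv_cFun : deriv cFun = cFunDeriv := funext fun x => (hasDerivAt_cFun x).deriv

theorem pi_mul_div_two_mem_Icc {x : ℝ} (hx : x ∈ Set.Icc (0 : ℝ) 1) :
    π * x / 2 ∈ Set.Icc 0 (π / 2) := by
  obtain ⟨h₀, h₁⟩ := hx
  constructor <;> nlinarith [pi_pos]

theorem cFunDeriv_nonneg {x : ℝ} (hx : x ∈ Set.Icc (0 : ℝ) 1) : 0 ≤ cFunDeriv x := by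
  obtain ⟨h₀, h₁⟩ := pi_mul_div_two_mem_Icc hx
  have := cos_nonneg_of_mem_Icc ⟨by linarith [pi_pos], h₁⟩
  unfold cFunDeriv
  positivity

theorem antitoneOn_cFunDeriv : AntitoneOn cFunDeriv (Set.Icc 0 1) := by
  intro x hx y hy hxy
  obtain ⟨hx₀, hx₁⟩ := pi_mul_div_two_mem_Icc hx
  obtain ⟨hy₀, hy₁⟩ := pi_mul_div_two_mem_Icc hy
  have hangle : π * x / 2 ≤ π * y / 2 := by gcongr
  have hcos : cos (π * y / 2) ≤ cos (π * x / 2) :=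
    cos_le_cos_of_nonneg_of_le_pi hx₀ (by linarith [pi_pos]) hangle
  have hsin : sin (π * x / 2) ≤ sin (π * y / 2) :=
    sin_le_sin_of_le_of_le_pi_div_two (by linarith [pi_pos]) hy₁ hangle
  have hcos₀ := cos_nonneg_of_mem_Icc ⟨by linarith [pi_pos], hy₁⟩
  have hsin₀ := sin_nonneg_of_nonneg_of_le_pi hx₀ (by linarith [pi_pos])
  have hcosx₀ := hcos₀.trans hcos
  unfold cFunDeriv
  gcongr

theorem concaveOn_cFun : ConcaveOn ℝ (Set.Icc 0 1) cFun :=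
  AntitoneOn.concaveOn_of_deriv (convex_Icc 0 1)
    (fun x _ => (hasDerivAt_cFun x).continuousAt.continuousWithinAt)
    (fun x _ => (hasDerivAt_cFun x).differentiableAt.differentiableWithinAt)
    (deriv_cFun ▸ antitoneOn_cFunDeriv.mono interior_subset)

theorem Csum_eq_sum_range (n : ℕ) : Csum n = ∑ j ∈ range n, cFun (j / n) := by
  rcases Nat.eq_zero_or_pos n with rfl | hn
  · simp [Csum]
  rw [Csum, range_eq_Ico, sum_eq_sum_Ico_succ_bot hn]
  have : Icc 1 (n - 1) = Ico 1 n := by ext; simp; omega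
  simp [this, cFun]

theorem natCast_mul_Csum (m n : ℕ) :
    (m : ℝ) * Csum n = ∑ i ∈ range (n * m), cFun ((i / m : ℕ) / n) := by
  rw [Csum_eq_sum_range, sum_range_mul_comp_div (fun j => cFun (j / n)), nsmul_eq_mul]

theorem natCast_div_div_mem_Icc {i m n : ℕ} (hi : i < m * n) :
    ((i / n : ℕ) : ℝ) / m ∈ Set.Icc 0 1 := by
  have : i / n < m := Nat.div_lt_of_lt_mul (by rwa [mul_comm])
  exact ⟨by positivity, div_le_one_of_le₀ (by exact_mod_cast this.le) (by positivity)⟩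

theorem sum_range_natCast_div_div_le {r s : ℕ} (hr : 0 < r) (hrs : r ≤ s) (k : ℕ) :
    ∑ i ∈ range k, ((i / s : ℕ) : ℝ) / r ≤ ∑ i ∈ range k, ((i / r : ℕ) : ℝ) / s := by
  have hs : 0 < s := hr.trans_le hrs
  rw [← sum_div, ← sum_div, div_le_div_iff₀ (by positivity) (by positivity), mul_comm, mul_sum,
    mul_comm, mul_sum]
  exact_mod_cast sum_range_mul_div_le hr hrs k

theorem Csum_ratio_monotone_general (r s : ℕ) (hr : 0 < r) (hrs : r ≤ s) :
    0 ≤ (r : ℝ) * Csum s - (s : ℝ) * Csum r := by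
  rw [sub_nonneg, natCast_mul_Csum, natCast_mul_Csum, Nat.mul_comm r s]
  exact concaveOn_cFun.sum_le_sum_of_sum_range_le
    (fun x _ => (hasDerivAt_cFun x).differentiableAt)
    (fun x hx => deriv_cFun ▸ cFunDeriv_nonneg hx)
    (fun i _ j _ hij => by gcongr)
    (fun i hi => natCast_div_div_mem_Icc hi)
    (fun i hi => natCast_div_div_mem_Icc (by rwa [mul_comm]))
    (fun k _ => sum_range_natCast_div_div_le hr hrs k)

theorem Csum_ratio_monotone (r s : ℕ) (hr : 0 < r) (hs : 0 < s) (hrs : r ≤ s) :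
    0 ≤ (r : ℝ) * Csum s - (s : ℝ) * Csum r :=
  Csum_ratio_monotone_general r s hr hrs
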